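/- arXiv:hep-th/9903056 — 4 statements merged into one kernel-verified Lean document; each statement's English description precedes it below -/
import Mathlib

section
/- Every element of a finite subgroup of SU(2) other than ±I has exactly two eigenvalues which are complex conjugate roots of unity, and in particular every finite subgroup of SU(2) of odd order is cyclic. -/
open Matrix
open scoped ComplexConjugate

noncomputable section
namespace SU2aux

abbrev M2 := Matrix (Fin 2) (Fin 2) ℂ

lemma cayley2 (A : M2) : A * A = A.trace • A - A.det • 1 := by
  ext i j
  fin_cases i <;> fin_cases j <;>
    simp [Matrix.mul_apply, Fin.sum_univ_two, Matrix.trace_fin_two, Matrix.det_fin_two,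
      Matrix.one_apply] <;> ring

lemma det_scalar_sub (A : M2) (r : ℂ) :
    (algebraMap ℂ M2 r - A).det = r ^ 2 - A.trace * r + A.det := by
  simp [Matrix.det_fin_two, Matrix.trace_fin_two, Matrix.algebraMap_matrix_apply, Matrix.one_apply]
  ring

lemma exists_quad_root (c : ℂ) : ∃ lam : ℂ, lam ^ 2 - c * lam + 1 = 0 := by
  obtain ⟨z, hz⟩ := IsAlgClosed.exists_pow_nat_eq (c ^ 2 - 4) (n := 2) two_pos
  exact ⟨(c + z) / 2, by field_simp; linear_combination hz⟩

lemma eigvec_of_det_zero (A : M2) (r : ℂ) (h : (algebraMap ℂ M2 r - A).det = 0) :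
    ∃ v : Fin 2 → ℂ, v ≠ 0 ∧ A.mulVec v = r • v := by
  obtain ⟨v, hv0, hv⟩ := (Matrix.exists_mulVec_eq_zero_iff).2 h
  refine ⟨v, hv0, ?_⟩
  rw [Matrix.sub_mulVec] at hv
  have h1 : (algebraMap ℂ M2 r).mulVec v = r • v := by
    simp [Algebra.algebraMap_eq_smul_one, Matrix.smul_mulVec, Matrix.one_mulVec]
  have := sub_eq_zero.mp hv
  rw [h1] at this
  exact this.symm

lemma mem_spectrum_iff_det (A : M2) (r : ℂ) :
    r ∈ spectrum ℂ A ↔ (algebraMap ℂ M2 r - A).det = 0 := by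
  rw [spectrum.mem_iff]
  constructor
  · intro h
    by_contra hd
    exact h ((Matrix.isUnit_iff_isUnit_det _).2 (Ne.isUnit hd))
  · intro h hu
    have := (Matrix.isUnit_iff_isUnit_det _).1 hu
    rw [h] at this
    exact not_isUnit_zero this

lemma part1 (x : Matrix.SpecialLinearGroup (Fin 2) ℂ) (m : ℕ) (hm : 0 < m)
    (hxm : x ^ m = 1) (h1 : x ≠ 1) (hneg : (x : M2) ≠ -1) :
    ∃ lam : ℂ, lam ≠ conj lam ∧ (∃ n : ℕ, 0 < n ∧ lam ^ n = 1) ∧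
      spectrum ℂ (x : M2) = {lam, conj lam} := by
  set A : M2 := (x : M2) with hA
  have hdet : A.det = 1 := x.2
  set c : ℂ := A.trace with hc
  obtain ⟨lam, hq⟩ := exists_quad_root c
  have hlam0 : lam ≠ 0 := by
    intro h; rw [h] at hq; simp at hq
  have hroot : (algebraMap ℂ M2 lam - A).det = 0 := by
    rw [det_scalar_sub, hdet, ← hc]; linear_combination hq
  obtain ⟨v, hv0, hv⟩ := eigvec_of_det_zero A lam hroot
  have hAm : A ^ m = 1 := by
    rw [hA, ← Matrix.SpecialLinearGroup.coe_pow, hxm, Matrix.SpecialLinearGroup.coe_one]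
  have hpowvec : ∀ k : ℕ, (A ^ k).mulVec v = lam ^ k • v := by
    intro k; induction k with
    | zero => simp
    | succ k ih =>
      rw [pow_succ, ← Matrix.mulVec_mulVec, hv, Matrix.mulVec_smul, ih, smul_smul, pow_succ,
        mul_comm]
  have hlamm : lam ^ m = 1 := by
    have := hpowvec m
    rw [hAm, Matrix.one_mulVec] at this
    have h2 : (lam ^ m - 1) • v = 0 := by rw [sub_smul, one_smul, ← this, sub_self]
    rcases smul_eq_zero.mp h2 with h | h
    · exact sub_eq_zero.mp h
    · exact absurd h hv0
  have hns : Complex.normSq lam = 1 := by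
    have h1 : Complex.normSq lam ^ m = 1 := by
      rw [← map_pow, hlamm]; simp
    have h0 : 0 ≤ Complex.normSq lam := Complex.normSq_nonneg lam
    by_contra hne2
    rcases lt_or_gt_of_ne hne2 with hlt | hgt
    · have := pow_lt_one₀ h0 hlt hm.ne'
      rw [h1] at this; exact lt_irrefl 1 this
    · have := one_lt_pow₀ hgt hm.ne'
      rw [h1] at this; exact lt_irrefl 1 this
  have hmul : lam * conj lam = 1 := by
    rw [Complex.mul_conj, hns, Complex.ofReal_one]
  have hconj : conj lam = lam⁻¹ := (inv_eq_of_mul_eq_one_right hmul).symm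
  have hcsum : c = lam + conj lam := by
    have h2 : lam * c = lam * (lam + conj lam) := by linear_combination -hq - hmul
    exact mul_left_cancel₀ hlam0 h2
  have hspec : spectrum ℂ A = {lam, conj lam} := by
    ext r
    rw [mem_spectrum_iff_det, det_scalar_sub, hdet, ← hc]
    simp only [Set.mem_insert_iff, Set.mem_singleton_iff]
    constructor
    · intro h
      have hfac : (r - lam) * (r - conj lam) = 0 := by
        linear_combination h + r * hcsum + hmul
      rcases mul_eq_zero.mp hfac with h' | h'
      · left; exact sub_eq_zero.mp h'
      · right; exact sub_eq_zero.mp h'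
    · rintro (rfl | rfl)
      · exact hq
      · linear_combination (-(conj lam)) * hcsum - hmul
  refine ⟨lam, ?_, ⟨m, hm, hlamm⟩, hspec⟩
  intro heq
  have hlam2 : lam ^ 2 = 1 := by
    have h3 := hmul
    rw [← heq] at h3
    linear_combination h3
  have hc2 : c = 2 * lam := by rw [hcsum, ← heq]; ring
  set N : M2 := A - lam • 1 with hN
  have hA2 : A = lam • (1 : M2) + N := by rw [hN]; abel
  have hll : lam * lam = 1 := by linear_combination hlam2
  have hNN : N * N = 0 := by
    have h4 := cayley2 A
    rw [hdet, ← hc] at h4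
    simp only [hN, sub_mul, mul_sub, Matrix.smul_mul, Matrix.mul_smul, one_mul, mul_one,
      smul_smul]
    rw [h4, hc2, hll]
    module
  have claim : ∀ k : ℕ, A ^ k = (lam ^ k) • (1 : M2) + ((k : ℂ) * lam ^ k / lam) • N := by
    intro k; induction k with
    | zero => simp
    | succ k ih =>
      rw [pow_succ, ih, hA2]
      simp only [mul_add, add_mul, Matrix.smul_mul, Matrix.mul_smul, one_mul, mul_one, hNN,
        smul_zero, smul_smul, add_zero]
      match_scalars
      all_goals
        push_cast
        field_simp
        ring
  have hNzero : N = 0 := by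
    have h5 := claim m
    rw [hAm, hlamm] at h5
    have h6 : (((m : ℂ) * 1 / lam)) • N = 0 := by
      rw [one_smul] at h5
      exact (left_eq_add.mp h5)
    rcases smul_eq_zero.mp h6 with h | h
    · exfalso
      rw [mul_one] at h
      exact (div_ne_zero (Nat.cast_ne_zero.2 hm.ne') hlam0) h
    · exact h
  have hAlam : A = lam • (1 : M2) := by rw [hA2, hNzero, add_zero]
  have hcases : (lam - 1) * (lam + 1) = 0 := by linear_combination hlam2
  rcases mul_eq_zero.mp hcases with h | h
  · have hl1 : lam = 1 := sub_eq_zero.mp h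
    apply h1
    have hx1 : A = 1 := by rw [hAlam, hl1, one_smul]
    exact Subtype.ext (by simpa using hx1)
  · have hl1 : lam = -1 := eq_neg_of_add_eq_zero_left h
    apply hneg
    rw [hAlam, hl1, neg_smul, one_smul]

abbrev SL2 := Matrix.SpecialLinearGroup (Fin 2) ℂ

lemma exists_eigen (A : M2) : ∃ r : ℂ, (algebraMap ℂ M2 r - A).det = 0 := by
  obtain ⟨z, hz⟩ := IsAlgClosed.exists_pow_nat_eq (A.trace ^ 2 - 4 * A.det) (n := 2) two_pos
  refine ⟨(A.trace + z) / 2, ?_⟩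
  rw [det_scalar_sub]
  field_simp
  linear_combination hz

lemma common_eigenvector (Γ : Subgroup SL2) (A : M2)
    (hAcomm : ∀ g : Γ, A * ((g : SL2) : M2) = ((g : SL2) : M2) * A)
    (hns : ∀ c : ℂ, A ≠ c • 1) :
    ∃ v : Fin 2 → ℂ, v ≠ 0 ∧ ∀ g : Γ, ∃ a : ℂ, ((g : SL2) : M2).mulVec v = a • v := by
  obtain ⟨r, hr⟩ := exists_eigen A
  set B : M2 := A - r • 1 with hB
  have hB0 : B ≠ 0 := by
    intro h
    exact hns r (by rw [← sub_eq_zero, ← hB, h])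
  have hdetB : B.det = 0 := by
    have : B = -(algebraMap ℂ M2 r - A) := by
      rw [hB, Algebra.algebraMap_eq_smul_one]; abel
    rw [this, Matrix.det_neg, hr]
    simp
  obtain ⟨v, hv0, hvB⟩ := Matrix.exists_mulVec_eq_zero_iff.mpr hdetB
  refine ⟨v, hv0, ?_⟩
  set f := B.mulVecLin with hf
  have hvker : v ∈ LinearMap.ker f := by
    rw [LinearMap.mem_ker, hf, Matrix.mulVecLin_apply, hvB]
  have hrange : LinearMap.range f ≠ ⊥ := by
    intro h
    apply hB0
    have hf0 : f = 0 := LinearMap.range_eq_bot.mp h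
    ext i j
    have := congrFun (congrArg DFunLike.coe hf0) (Pi.single j 1)
    have h2 : B.mulVec (Pi.single j 1) = 0 := this
    have h3 := congrFun h2 i
    rw [Matrix.mulVec_single] at h3
    simpa using h3
  have hker_le : Module.finrank ℂ (LinearMap.ker f) ≤ 1 := by
    have h4 := LinearMap.finrank_range_add_finrank_ker f
    have h5 : Module.finrank ℂ (Fin 2 → ℂ) = 2 := by simp
    have h6 : 0 < Module.finrank ℂ (LinearMap.range f) :=
      Module.finrank_pos_iff.mpr (Submodule.nontrivial_iff_ne_bot.mpr hrange)
    omega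
  have hspan : Submodule.span ℂ {v} = LinearMap.ker f := by
    apply Submodule.eq_of_le_of_finrank_le
    · rwa [Submodule.span_le, Set.singleton_subset_iff]
    · rw [finrank_span_singleton hv0] at *
      exact hker_le
  intro g
  have hBcomm : B * ((g : SL2) : M2) = ((g : SL2) : M2) * B := by
    rw [hB, sub_mul, mul_sub, hAcomm g, Matrix.smul_mul, Matrix.mul_smul, one_mul, mul_one]
  have hgv : ((g : SL2) : M2).mulVec v ∈ LinearMap.ker f := by
    rw [LinearMap.mem_ker, hf, Matrix.mulVecLin_apply, Matrix.mulVec_mulVec, hBcomm,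
      ← Matrix.mulVec_mulVec, hvB, Matrix.mulVec_zero]
  rw [← hspan, Submodule.mem_span_singleton] at hgv
  obtain ⟨a, ha⟩ := hgv
  exact ⟨a, ha.symm⟩

lemma smul_cancel {v : Fin 2 → ℂ} (hv0 : v ≠ 0) {b c : ℂ} (h : b • v = c • v) : b = c := by
  by_contra hbc
  apply hv0
  have h2 : (b - c) • v = 0 := by rw [sub_smul, h, sub_self]
  rcases smul_eq_zero.mp h2 with h3 | h3
  · exact absurd (sub_eq_zero.mp h3) hbc
  · exact h3

lemma cyclic_of_common_eigenvector (Γ : Subgroup SL2) (hfin : Finite Γ)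
    (hodd : Odd (Nat.card Γ)) (v : Fin 2 → ℂ) (hv0 : v ≠ 0)
    (hev : ∀ g : Γ, ∃ a : ℂ, ((g : SL2) : M2).mulVec v = a • v) : IsCyclic Γ := by
  choose a ha using hev
  have ha1 : a 1 = 1 := by
    apply smul_cancel hv0
    rw [← ha 1]
    have : (((1 : Γ) : SL2) : M2) = 1 := by norm_cast
    rw [this, Matrix.one_mulVec, one_smul]
  have hamul : ∀ g h : Γ, a (g * h) = a g * a h := by
    intro g h
    apply smul_cancel hv0
    rw [← ha (g * h)]
    have hcoe : (((g * h : Γ) : SL2) : M2) = ((g : SL2) : M2) * ((h : SL2) : M2) := by norm_cast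
    rw [hcoe, ← Matrix.mulVec_mulVec, ha h, Matrix.mulVec_smul, ha g, smul_smul,
      mul_comm (a h)]
  have hane : ∀ g : Γ, a g ≠ 0 := by
    intro g hg0
    apply hv0
    have h1 : ((g : SL2) : M2).mulVec v = 0 := by rw [ha g, hg0, zero_smul]
    have hcoe : (((g⁻¹ : Γ) : SL2) : M2) * ((g : SL2) : M2) = 1 := by
      have h6 : (((g⁻¹ : Γ) : SL2) : M2) = ((g : SL2) : M2).adjugate := by
        rw [InvMemClass.coe_inv, Matrix.SpecialLinearGroup.coe_inv]
      rw [h6, Matrix.adjugate_mul, (g : SL2).prop, one_smul]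
    calc v = ((((g⁻¹ : Γ) : SL2) : M2) * ((g : SL2) : M2)).mulVec v := by
              rw [hcoe, Matrix.one_mulVec]
    _ = (((g⁻¹ : Γ) : SL2) : M2).mulVec (((g : SL2) : M2).mulVec v) := by
              rw [Matrix.mulVec_mulVec]
    _ = 0 := by rw [h1, Matrix.mulVec_zero]
  let φ : Γ →* ℂˣ := MonoidHom.mk' (fun g => Units.mk0 (a g) (hane g))
    (fun g h => Units.ext (hamul g h))
  have hinj : Function.Injective φ := by
    rw [injective_iff_map_eq_one]
    intro g hg
    have hag : a g = 1 := by
      have := congrArg Units.val hg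
      simpa [φ] using this
    by_contra hg1
    -- g ≠ 1; get (g : SL2) ≠ 1 and matrix ≠ -1
    have hx1 : (g : SL2) ≠ 1 := fun h => hg1 (Subtype.ext h)
    have hxneg : ((g : SL2) : M2) ≠ -1 := by
      intro h
      have hSL : ((g : SL2)) ^ 2 = 1 := by
        apply Subtype.coe_injective
        show (((g : SL2) ^ 2 : SL2) : M2) = ((1 : SL2) : M2)
        rw [Matrix.SpecialLinearGroup.coe_pow, Matrix.SpecialLinearGroup.coe_one, h]
        norm_num
      have hg2 : g ^ 2 = 1 := by
        apply Subtype.coe_injective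
        show ((g ^ 2 : Γ) : SL2) = ((1 : Γ) : SL2)
        rw [SubgroupClass.coe_pow, OneMemClass.coe_one, hSL]
      have h2 : orderOf g ∣ 2 := orderOf_dvd_of_pow_eq_one hg2
      rcases (Nat.dvd_prime Nat.prime_two).mp h2 with h3 | h3
      · exact hg1 (orderOf_eq_one_iff.mp h3)
      · have hdvd : 2 ∣ Nat.card Γ := by
          have h8 := orderOf_dvd_natCard g
          rwa [h3] at h8
        exact (Nat.not_even_iff_odd.mpr hodd) ((even_iff_two_dvd).mpr hdvd)
    have hm : 0 < orderOf g := orderOf_pos g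
    have hxm : (g : SL2) ^ orderOf g = 1 := by
      have := pow_orderOf_eq_one g
      have h2 : ((g ^ orderOf g : Γ) : SL2) = ((1 : Γ) : SL2) := by rw [this]
      push_cast at h2
      exact h2
    obtain ⟨lam, hlam_ne, _, hspec⟩ := part1 (g : SL2) (orderOf g) hm hxm hx1 hxneg
    have h1spec : (1 : ℂ) ∈ spectrum ℂ ((g : SL2) : M2) := by
      rw [mem_spectrum_iff_det]
      apply Matrix.exists_mulVec_eq_zero_iff.mp
      refine ⟨v, hv0, ?_⟩
      rw [Matrix.sub_mulVec, ha g, hag, one_smul]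
      have : (algebraMap ℂ M2 1).mulVec v = v := by
        rw [RingHom.map_one, Matrix.one_mulVec]
      rw [this, sub_self]
    rw [hspec] at h1spec
    rcases h1spec with h4 | h4
    · apply hlam_ne; rw [← h4]; simp
    · simp only [Set.mem_singleton_iff] at h4
      have hlam1 : lam = 1 := by
        have h5 := congrArg (starRingEnd ℂ) h4
        simpa using h5.symm
      apply hlam_ne
      rw [hlam1]
      simp
  haveI : Finite φ.range := Set.Finite.to_subtype (Set.finite_range φ)
  haveI : IsCyclic φ.range := subgroup_units_cyclic _
  exact isCyclic_of_surjective (MonoidHom.ofInjective hinj).symm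
    (MulEquiv.surjective _)

lemma trace_sq (A : M2) : (A * A).trace = A.trace ^ 2 - 2 * A.det := by
  rw [cayley2]
  simp [Matrix.trace_smul, Matrix.trace_one]
  ring

lemma no_irreducible (Γ : Subgroup SL2) (hfin : Finite Γ)
    (hSU : ∀ x ∈ Γ, (x : M2) ∈ Matrix.unitaryGroup (Fin 2) ℂ)
    (hodd : Odd (Nat.card Γ))
    (hcom : ∀ A : M2, (∀ g : Γ, A * ((g : SL2) : M2) = ((g : SL2) : M2) * A) →
      ∃ c : ℂ, A = c • 1) : False := by
  haveI : Fintype Γ := Fintype.ofFinite Γ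
  set u : Γ → M2 := fun g => ((g : SL2) : M2) with hu
  set n : ℕ := Nat.card Γ with hn
  have hncard : n = Fintype.card Γ := Nat.card_eq_fintype_card
  have hu_mul : ∀ g h : Γ, u (g * h) = u g * u h := by
    intro g h; simp [hu]
  have hu_one : u 1 = 1 := by simp [hu]
  have hu_inv_mul : ∀ g : Γ, u g⁻¹ * u g = 1 := by
    intro g; rw [← hu_mul, inv_mul_cancel, hu_one]
  have hu_mul_inv : ∀ g : Γ, u g * u g⁻¹ = 1 := by
    intro g; rw [← hu_mul, mul_inv_cancel, hu_one]
  have hu_det : ∀ g : Γ, (u g).det = 1 := fun g => (g : SL2).prop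
  have htrinv : ∀ g : Γ, (u g⁻¹).trace = (u g).trace := by
    intro g
    have h6 : u g⁻¹ = (u g).adjugate := by
      show (((g⁻¹ : Γ) : SL2) : M2) = _
      rw [InvMemClass.coe_inv, Matrix.SpecialLinearGroup.coe_inv]
    rw [h6, Matrix.adjugate_fin_two]
    simp [Matrix.trace_fin_two]
    ring
  set S : ℂ := ∑ g : Γ, (u g).trace with hS
  set Q : ℂ := ∑ g : Γ, (u g).trace ^ 2 with hQ
  have hcop : (Nat.card Γ).Coprime 2 := Odd.coprime_two_right hodd
  have hsq_sum : S = Q - 2 * n := by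
    have h1 : S = ∑ g : Γ, (u (g ^ 2)).trace := by
      rw [hS]
      exact (Fintype.sum_equiv (powCoprime hcop) _ _ (fun g => by simp [powCoprime])).symm
    have h2 : ∀ g : Γ, (u (g ^ 2)).trace = (u g).trace ^ 2 - 2 := by
      intro g
      have h3 : u (g ^ 2) = u g * u g := by
        rw [pow_two, hu_mul]
      rw [h3, trace_sq, hu_det]
      ring
    rw [h1, Finset.sum_congr rfl (fun g _ => h2 g)]
    rw [Finset.sum_sub_distrib, Finset.sum_const, Finset.card_univ, ← hncard, ← hQ]
    simp [nsmul_eq_mul]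
    ring
  -- averaged conjugation
  have key : ∀ A : M2, ∃ c : ℂ, (∑ g : Γ, u g * A * u g⁻¹) = c • 1 ∧
      2 * c = n * A.trace := by
    intro A
    set Φ : M2 := ∑ g : Γ, u g * A * u g⁻¹ with hΦ
    have hconj : ∀ h g : Γ, u h * (u g * A * u g⁻¹) = (u (h * g) * A * u (h * g)⁻¹) * u h := by
      intro h g
      rw [hu_mul, _root_.mul_inv_rev, hu_mul]
      simp only [mul_assoc, hu_inv_mul, mul_one]
    have hΦcomm : ∀ h : Γ, Φ * u h = u h * Φ := by
      intro h
      rw [hΦ, Finset.sum_mul, Finset.mul_sum]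
      exact (Fintype.sum_equiv (Equiv.mulLeft h) _ _ (fun g => by
        simpa using (hconj h g))).symm
    obtain ⟨c, hc⟩ := hcom Φ (fun g => hΦcomm g)
    have htrΦ : Φ.trace = n * A.trace := by
      rw [hΦ, Matrix.trace_sum]
      have h5 : ∀ g : Γ, (u g * A * u g⁻¹).trace = A.trace := by
        intro g
        rw [Matrix.trace_mul_comm, ← mul_assoc, hu_inv_mul, one_mul]
      rw [Finset.sum_congr rfl (fun g _ => h5 g), Finset.sum_const, Finset.card_univ, ← hncard]
      simp [nsmul_eq_mul]
    refine ⟨c, hc, ?_⟩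
    rw [hc] at htrΦ
    rw [← htrΦ, Matrix.trace_smul, Matrix.trace_one]
    simp
    ring
  have hpair : ∀ i j : Fin 2, (∑ g : Γ, (u g) i i * (u g⁻¹) j j)
      = if i = j then (n : ℂ) / 2 else 0 := by
    intro i j
    obtain ⟨c, hc1, hc2⟩ := key (Matrix.single i j 1 : M2)
    have hentry : ∀ g : Γ, (u g * (Matrix.single i j 1 : M2) * u g⁻¹) i j
        = (u g) i i * (u g⁻¹) j j := by
      intro g
      fin_cases i <;> fin_cases j <;>
        simp [Matrix.mul_apply, Matrix.single, Fin.sum_univ_two] <;> ring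
    have hsum := congrFun (congrFun hc1 i) j
    rw [Matrix.sum_apply] at hsum
    rw [Finset.sum_congr rfl (fun g _ => hentry g)] at hsum
    rw [hsum]
    by_cases hij : i = j
    · subst hij
      have htr : (Matrix.single i i (1 : ℂ)).trace = 1 := by
        fin_cases i <;> simp [Matrix.trace_fin_two, Matrix.single]
      rw [htr, mul_one] at hc2
      simp only [Matrix.smul_apply, Matrix.one_apply_eq, smul_eq_mul, mul_one, if_pos rfl]
      field_simp
      rw [if_pos trivial]
      linear_combination hc2 / 2
    · have htr : (Matrix.single i j (1 : ℂ)).trace = 0 := by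
        fin_cases i <;> fin_cases j <;>
          first
            | exact absurd rfl hij
            | simp [Matrix.trace_fin_two, Matrix.single]
      rw [if_neg hij]
      simp [Matrix.smul_apply, Matrix.one_apply_ne hij]
  have hQn : Q = n := by
    have h1 : Q = ∑ g : Γ, (u g).trace * (u g⁻¹).trace := by
      rw [hQ]
      exact Finset.sum_congr rfl (fun g _ => by rw [htrinv]; ring)
    have h2 : ∀ g : Γ, (u g).trace * (u g⁻¹).trace =
        (u g) 0 0 * (u g⁻¹) 0 0 + ((u g) 0 0 * (u g⁻¹) 1 1 +
        ((u g) 1 1 * (u g⁻¹) 0 0 + (u g) 1 1 * (u g⁻¹) 1 1)) := by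
      intro g
      rw [Matrix.trace_fin_two, Matrix.trace_fin_two]
      ring
    rw [h1, Finset.sum_congr rfl (fun g _ => h2 g), Finset.sum_add_distrib,
      Finset.sum_add_distrib, Finset.sum_add_distrib, hpair 0 0, hpair 0 1, hpair 1 0,
      hpair 1 1]
    norm_num
  -- the sum matrix T
  set T : M2 := ∑ g : Γ, u g with hT
  have hTh : ∀ h : Γ, T * u h = T := by
    intro h
    rw [hT, Finset.sum_mul]
    exact Fintype.sum_equiv (Equiv.mulRight h) _ _ (fun g => (hu_mul g h).symm)
  have hTT : T * T = (n : ℂ) • T := by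
    calc T * T = ∑ h : Γ, T * u h := by rw [hT, Finset.mul_sum]
    _ = ∑ _h : Γ, T := Finset.sum_congr rfl (fun h _ => hTh h)
    _ = (Fintype.card Γ) • T := by rw [Finset.sum_const, Finset.card_univ]
    _ = (n : ℂ) • T := by rw [← hncard, Nat.cast_smul_eq_nsmul]
  have hstar : ∀ g : Γ, (u g)ᴴ = u g⁻¹ := by
    intro g
    have hmem := hSU (g : SL2) g.2
    have h9 : star (u g) * u g = 1 := Matrix.mem_unitaryGroup_iff'.mp hmem
    calc (u g)ᴴ = star (u g) := rfl
    _ = star (u g) * (u g * u g⁻¹) := by rw [hu_mul_inv, mul_one]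
    _ = (star (u g) * u g) * u g⁻¹ := by rw [mul_assoc]
    _ = u g⁻¹ := by rw [h9, one_mul]
  have hTstar : Tᴴ = T := by
    rw [hT, Matrix.conjTranspose_sum, Finset.sum_congr rfl (fun g _ => hstar g)]
    exact Fintype.sum_equiv (Equiv.inv Γ) _ _ (fun g => rfl)
  have htrT : T.trace = S := by rw [hT, Matrix.trace_sum]
  have hSval : S = -(n : ℂ) := by rw [hsq_sum, hQn]; ring
  set r : ℝ := Complex.normSq (T 0 0) + Complex.normSq (T 0 1) + Complex.normSq (T 1 0)
      + Complex.normSq (T 1 1) with hr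
  have hfrob : ((r : ℝ) : ℂ) = (Tᴴ * T).trace := by
    rw [hr, Matrix.trace_fin_two]
    push_cast [Complex.normSq_eq_conj_mul_self]
    simp [Matrix.mul_apply, Fin.sum_univ_two, Matrix.conjTranspose_apply]
    ring
  have hcontr : ((r : ℝ) : ℂ) = -((n : ℝ) ^ 2 : ℝ) := by
    rw [hfrob, hTstar, hTT, Matrix.trace_smul, smul_eq_mul, htrT, hSval]
    push_cast
    ring
  have hrval : r = -((n : ℝ) ^ 2) := by exact_mod_cast hcontr
  have hrpos : 0 ≤ r := by
    rw [hr]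
    have h1 := Complex.normSq_nonneg (T 0 0)
    have h2 := Complex.normSq_nonneg (T 0 1)
    have h3 := Complex.normSq_nonneg (T 1 0)
    have h4 := Complex.normSq_nonneg (T 1 1)
    linarith
  have hn0 : 0 < n := Odd.pos hodd
  have : (0 : ℝ) < (n : ℝ) ^ 2 := by positivity
  linarith [hrval ▸ hrpos]

end SU2aux
end

/-- Every element of a finite subgroup of `SU(2)` other than `±I` has exactly two
eigenvalues, which are complex-conjugate roots of unity; and every finite subgroup of
`SU(2)` of odd order is cyclic.  Here a finite subgroup of `SU(2)` is realized as a
finite subgroup `Γ` of `SL(2,ℂ)` all of whose elements are unitary matrices. -/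
theorem su2_eigenvalues_and_odd_cyclic
    (Γ : Subgroup (Matrix.SpecialLinearGroup (Fin 2) ℂ)) (hfin : Finite Γ)
    (hSU : ∀ x ∈ Γ, (x : Matrix (Fin 2) (Fin 2) ℂ) ∈ Matrix.unitaryGroup (Fin 2) ℂ) :
    (∀ x ∈ Γ, x ≠ 1 → (x : Matrix (Fin 2) (Fin 2) ℂ) ≠ -1 →
      ∃ lam : ℂ, lam ≠ conj lam ∧ (∃ n : ℕ, 0 < n ∧ lam ^ n = 1) ∧
        spectrum ℂ ((x : Matrix.SpecialLinearGroup (Fin 2) ℂ) :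
          Matrix (Fin 2) (Fin 2) ℂ) = {lam, conj lam}) ∧
    (Odd (Nat.card Γ) → IsCyclic Γ) := by
  haveI := hfin
  constructor
  · intro x hx hx1 hxneg
    set y : Γ := ⟨x, hx⟩ with hy
    have hm : 0 < orderOf y := orderOf_pos y
    have hxm : x ^ orderOf y = 1 := by
      have h1 := pow_orderOf_eq_one y
      have h2 := congrArg (fun t : Γ => (t : SU2aux.SL2)) h1
      simp only [SubgroupClass.coe_pow, OneMemClass.coe_one] at h2
      exact h2
    exact SU2aux.part1 x (orderOf y) hm hxm hx1 hxneg
  · intro hodd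
    by_cases hcom : ∃ A : SU2aux.M2,
        (∀ g : Γ, A * ((g : SU2aux.SL2) : SU2aux.M2) = ((g : SU2aux.SL2) : SU2aux.M2) * A) ∧
        ∀ c : ℂ, A ≠ c • 1
    · obtain ⟨A, h1, h2⟩ := hcom
      obtain ⟨v, hv0, hev⟩ := SU2aux.common_eigenvector Γ A h1 h2
      exact SU2aux.cyclic_of_common_eigenvector Γ hfin hodd v hv0 hev
    · push_neg at hcom
      exact (SU2aux.no_irreducible Γ hfin hSU hodd hcom).elim
end

section
/- The Cartan matrix C of a simply-laced Dynkin diagram (C = 2I − A, with A the adjacency matrix) of type A_n, D_n, E_6, E_7, or E_8 is positive definite. -/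
open SimpleGraph

/-- Adjacency matrix over `ℝ` (with classical decidability of adjacency). -/
noncomputable def adjMat {V : Type} [Fintype V] [DecidableEq V] (G : SimpleGraph V) :
    Matrix V V ℝ :=
  letI := Classical.decRel G.Adj
  G.adjMatrix ℝ

/-- The Cartan matrix `C = 2I − A` of a simply-laced diagram with adjacency matrix `A`. -/
noncomputable def cartanMat {V : Type} [Fintype V] [DecidableEq V]
    (G : SimpleGraph V) : Matrix V V ℝ :=
  2 • (1 : Matrix V V ℝ) - adjMat G

/-- The Dynkin diagram `D_n` on `n` nodes: a chain `0 — 1 — ⋯ — (n-2)` together with an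
extra node `n-1` attached to node `n-3`. -/
def typeD (n : ℕ) : SimpleGraph (Fin n) :=
  SimpleGraph.fromRel (fun i j =>
    ((i : ℕ) + 1 = j ∧ (j : ℕ) ≤ n - 2) ∨ ((i : ℕ) = n - 3 ∧ (j : ℕ) = n - 1))

/-- The Dynkin diagram `E_m` (`m = 6,7,8`) on `m` nodes: a chain `0 — 1 — ⋯ — (m-2)`
together with an extra node `m-1` attached to node `2`. -/
def typeE (m : ℕ) : SimpleGraph (Fin m) :=
  SimpleGraph.fromRel (fun i j =>
    ((i : ℕ) + 1 = j ∧ (j : ℕ) ≤ m - 2) ∨ ((i : ℕ) = 2 ∧ (j : ℕ) = m - 1))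

open Finset Matrix


lemma posDef_of_weights {V : Type} [Fintype V] [DecidableEq V] (C : Matrix V V ℝ)
    (hsym : C.IsHermitian) (hoff : ∀ i j : V, i ≠ j → C i j ≤ 0)
    (w : V → ℝ) (hw : ∀ i, 0 < w i) (hCw : ∀ i, 0 < (C *ᵥ w) i) :
    C.PosDef := by
  refine Matrix.posDef_iff_dotProduct_mulVec.mpr ⟨hsym, fun x hx => ?_⟩
  obtain ⟨y, hxw⟩ : ∃ y : V → ℝ, ∀ i, x i = w i * y i :=
    ⟨fun i => x i / w i, fun i => by
      rw [mul_comm]; exact (div_mul_cancel₀ (x i) (hw i).ne').symm⟩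
  have hQ : dotProduct (star x) (C *ᵥ x) = ∑ i, ∑ j, C i j * w i * w j * (y i * y j) := by
    simp only [dotProduct, mulVec, star, Pi.star_apply, star_trivial, id_eq, Finset.mul_sum]
    refine Finset.sum_congr rfl fun i _ => Finset.sum_congr rfl fun j _ => ?_
    rw [hxw i, hxw j]; ring
  have hterm : ∀ i j : V, C i j * w i * w j * ((y i ^ 2 + y j ^ 2) / 2)
      ≤ C i j * w i * w j * (y i * y j) := by
    intro i j
    rcases eq_or_ne i j with rfl | hij
    · apply le_of_eq; ring
    · apply mul_le_mul_of_nonpos_left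
      · nlinarith [sq_nonneg (y i - y j)]
      · nlinarith [hoff i j hij, mul_nonneg (hw i).le (hw j).le]
  have hS : ∑ i, ∑ j, C i j * w i * w j * ((y i ^ 2 + y j ^ 2) / 2)
      = ∑ i, y i ^ 2 * w i * (C *ᵥ w) i := by
    have h1 : ∀ i j : V, C i j * w i * w j * ((y i ^ 2 + y j ^ 2) / 2)
        = C i j * w i * w j * y i ^ 2 / 2 + C i j * w i * w j * y j ^ 2 / 2 := by
      intro i j; ring
    simp only [h1, Finset.sum_add_distrib]
    have h2 : ∑ i, ∑ j, C i j * w i * w j * y j ^ 2 / 2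
        = ∑ i, ∑ j, C i j * w i * w j * y i ^ 2 / 2 := by
      rw [Finset.sum_comm]
      refine Finset.sum_congr rfl fun i _ => Finset.sum_congr rfl fun j _ => ?_
      have : C j i = C i j := by
        have := congrFun (congrFun hsym.symm j) i
        simpa [Matrix.conjTranspose_apply] using this
      rw [this]; ring
    rw [h2, ← Finset.sum_add_distrib]
    refine Finset.sum_congr rfl fun i _ => ?_
    rw [← Finset.sum_add_distrib]
    have : (C *ᵥ w) i = ∑ j, C i j * w j := by simp [mulVec, dotProduct]
    rw [this, Finset.mul_sum]
    refine Finset.sum_congr rfl fun j _ => by ring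
  have hpos : 0 < ∑ i, y i ^ 2 * w i * (C *ᵥ w) i := by
    obtain ⟨i0, hi0⟩ : ∃ i, x i ≠ 0 := Function.ne_iff.mp hx
    have hy0 : y i0 ≠ 0 := by
      intro h; apply hi0; rw [hxw i0, h, mul_zero]
    refine Finset.sum_pos' (fun i _ => ?_) ⟨i0, Finset.mem_univ _, ?_⟩
    · have := (hw i).le
      have := (hCw i).le
      positivity
    · have h1 : 0 < y i0 ^ 2 := by positivity
      have := hw i0
      have := hCw i0
      positivity
  calc (0:ℝ) < ∑ i, y i ^ 2 * w i * (C *ᵥ w) i := hpos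
    _ = ∑ i, ∑ j, C i j * w i * w j * ((y i ^ 2 + y j ^ 2) / 2) := hS.symm
    _ ≤ ∑ i, ∑ j, C i j * w i * w j * (y i * y j) :=
        Finset.sum_le_sum fun i _ => Finset.sum_le_sum fun j _ => hterm i j
    _ = dotProduct (star x) (C *ᵥ x) := hQ.symm

lemma adjMat_eq' {V : Type} [Fintype V] [DecidableEq V] (G : SimpleGraph V)
    [h : DecidableRel G.Adj] : adjMat G = G.adjMatrix ℝ := by
  unfold adjMat; congr!

lemma cartan_mulVec {V : Type} [Fintype V] [DecidableEq V] (G : SimpleGraph V)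
    [DecidableRel G.Adj] (w : V → ℝ) (i : V) :
    (cartanMat G *ᵥ w) i = 2 * w i - ∑ j ∈ G.neighborFinset i, w j := by
  rw [cartanMat, adjMat_eq', Matrix.sub_mulVec, two_smul]
  simp only [Matrix.add_mulVec, Matrix.one_mulVec, Pi.sub_apply, Pi.add_apply,
    SimpleGraph.adjMatrix_mulVec_apply]
  ring

lemma cartan_apply {V : Type} [Fintype V] [DecidableEq V] (G : SimpleGraph V)
    [DecidableRel G.Adj] (i j : V) :
    cartanMat G i j = (if i = j then 2 else 0) - (if G.Adj i j then 1 else 0) := by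
  rw [cartanMat, adjMat_eq']
  rw [Matrix.sub_apply, Matrix.smul_apply, Matrix.one_apply, SimpleGraph.adjMatrix_apply]
  split_ifs <;> simp

lemma cartan_isHermitian {V : Type} [Fintype V] [DecidableEq V] (G : SimpleGraph V) :
    (cartanMat G).IsHermitian := by
  classical
  rw [cartanMat, adjMat_eq', two_smul]
  refine Matrix.IsHermitian.sub (Matrix.isHermitian_one.add Matrix.isHermitian_one) ?_
  ext i j
  simp [Matrix.conjTranspose_apply, SimpleGraph.adjMatrix_apply, G.adj_comm i j]

lemma cartan_offdiag {V : Type} [Fintype V] [DecidableEq V] (G : SimpleGraph V)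
    (i j : V) (hij : i ≠ j) : cartanMat G i j ≤ 0 := by
  classical
  rw [cartan_apply, if_neg hij]
  split <;> norm_num

lemma cartan_posDef {V : Type} [Fintype V] [DecidableEq V] (G : SimpleGraph V)
    (w : V → ℝ) (hw : ∀ i, 0 < w i) (hCw : ∀ i, 0 < (cartanMat G *ᵥ w) i) :
    (cartanMat G).PosDef :=
  posDef_of_weights (cartanMat G) (cartan_isHermitian G) (cartan_offdiag G) w hw hCw

lemma nbr_sum_le {k : ℕ} (G : SimpleGraph (Fin k)) [DecidableRel G.Adj] (i : Fin k)
    (f : ℤ → ℝ) (T : Finset ℤ)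
    (hT : ∀ j : Fin k, G.Adj i j → ((j : ℕ) : ℤ) ∈ T)
    (hf : ∀ t ∈ T, 0 ≤ f t) :
    ∑ j ∈ G.neighborFinset i, f ((j : ℕ) : ℤ) ≤ ∑ t ∈ T, f t := by
  have hinj : ∀ a ∈ G.neighborFinset i, ∀ b ∈ G.neighborFinset i,
      ((a : ℕ) : ℤ) = ((b : ℕ) : ℤ) → a = b := by
    intro a _ b _ h
    exact Fin.val_injective (by exact_mod_cast h)
  rw [show ∑ j ∈ G.neighborFinset i, f ((j : ℕ) : ℤ)
      = ∑ t ∈ (G.neighborFinset i).image (fun j : Fin k => ((j : ℕ) : ℤ)), f t from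
    (Finset.sum_image hinj).symm]
  apply Finset.sum_le_sum_of_subset_of_nonneg
  · intro t ht
    simp only [Finset.mem_image] at ht
    obtain ⟨j, hj, rfl⟩ := ht
    exact hT j (by simpa using hj)
  · intro t ht _
    exact hf t ht

lemma path_posDef (n : ℕ) : (cartanMat (pathGraph n)).PosDef := by
  classical
  set f : ℤ → ℝ := fun z => ((z : ℝ) + 1) * ((n : ℝ) - (z : ℝ)) with hf
  apply cartan_posDef _ (fun j : Fin n => f ((j : ℕ) : ℤ))
  · intro j
    have hj : ((j : ℕ) : ℝ) + 1 ≤ (n : ℝ) := by exact_mod_cast j.isLt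
    have h0 : (0 : ℝ) ≤ ((j : ℕ) : ℝ) := by positivity
    simp only [hf]
    push_cast
    nlinarith
  · intro i
    rw [cartan_mulVec]
    have hIlt : ((i : ℕ) : ℤ) < (n : ℤ) := by exact_mod_cast i.isLt
    have hi0 : (0 : ℤ) ≤ ((i : ℕ) : ℤ) := by positivity
    have hb : ∑ j ∈ (pathGraph n).neighborFinset i, f ((j : ℕ) : ℤ)
        ≤ f (((i : ℕ) : ℤ) - 1) + f (((i : ℕ) : ℤ) + 1) := by
      have h := nbr_sum_le (pathGraph n) i f {((i : ℕ) : ℤ) - 1, ((i : ℕ) : ℤ) + 1} ?_ ?_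
      · rwa [Finset.sum_pair (by omega)] at h
      · intro j hj
        rw [SimpleGraph.pathGraph_adj] at hj
        simp only [Finset.mem_insert, Finset.mem_singleton]
        omega
      · intro t ht
        simp only [Finset.mem_insert, Finset.mem_singleton] at ht
        have h1 : (0 : ℝ) ≤ (t : ℝ) + 1 := by
          have : (0 : ℤ) ≤ t + 1 := by omega
          exact_mod_cast this
        have h2 : (0 : ℝ) ≤ (n : ℝ) - (t : ℝ) := by
          have : (0 : ℤ) ≤ (n : ℤ) - t := by omega
          exact_mod_cast this
        exact mul_nonneg h1 h2
    have key : f (((i : ℕ) : ℤ) - 1) + f (((i : ℕ) : ℤ) + 1) = 2 * f ((i : ℕ) : ℤ) - 2 := by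
      simp only [hf]; push_cast; ring
    linarith

lemma typeD_posDef (n : ℕ) (hn : 4 ≤ n) : (cartanMat (typeD n)).PosDef := by
  classical
  set f : ℤ → ℝ := fun z =>
    if (n : ℤ) - 2 ≤ z then (n : ℝ) * ((n : ℝ) - 1)
    else 2 * ((z : ℝ) + 1) * (2 * (n : ℝ) - 2 - (z : ℝ)) with hfdef
  have hnR : (4 : ℝ) ≤ (n : ℝ) := by exact_mod_cast hn
  have fnonneg : ∀ z : ℤ, -1 ≤ z → 0 ≤ f z := by
    intro z hz
    have hzR : (-1 : ℝ) ≤ (z : ℝ) := by exact_mod_cast hz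
    simp only [hfdef]
    split
    · nlinarith
    · rename_i h
      have hzR2 : (z : ℝ) ≤ (n : ℝ) - 2 := by
        have h : z ≤ (n : ℤ) - 2 := by omega
        exact_mod_cast h
      nlinarith
  have fpos : ∀ z : ℤ, 0 ≤ z → z ≤ (n : ℤ) - 1 → 0 < f z := by
    intro z hz0 hz1
    have hzR0 : (0 : ℝ) ≤ (z : ℝ) := by exact_mod_cast hz0
    have hzR1 : (z : ℝ) ≤ (n : ℝ) - 1 := by
      exact_mod_cast hz1
    simp only [hfdef]
    split
    · nlinarith
    · nlinarith
  apply cartan_posDef _ (fun j : Fin n => f ((j : ℕ) : ℤ))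
  · intro j
    exact fpos _ (by positivity) (by have := j.isLt; omega)
  · intro i
    rw [cartan_mulVec]
    have hi : (i : ℕ) < n := i.isLt
    -- adjacency facts extractor
    have hadj : ∀ j : Fin n, (typeD n).Adj i j →
        ((i : ℕ) + 1 = (j : ℕ) ∧ (j : ℕ) ≤ n - 2) ∨ ((j : ℕ) + 1 = (i : ℕ) ∧ (i : ℕ) ≤ n - 2)
        ∨ ((i : ℕ) = n - 3 ∧ (j : ℕ) = n - 1) ∨ ((j : ℕ) = n - 3 ∧ (i : ℕ) = n - 1) := by
      intro j hj
      simp only [typeD, SimpleGraph.fromRel_adj] at hj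
      tauto
    by_cases hA : (i : ℕ) = n - 1
    · -- extra node
      have hb := nbr_sum_le (typeD n) i f {(n : ℤ) - 3} ?_ ?_
      · rw [Finset.sum_singleton] at hb
        have hvi : ((i : ℕ) : ℤ) = (n : ℤ) - 1 := by omega
        rw [hvi]
        have e1 : f ((n : ℤ) - 3) = 2 * ((n : ℝ) - 2) * ((n : ℝ) + 1) := by
          simp only [hfdef]; rw [if_neg (by omega)]; push_cast; ring
        have e2 : f ((n : ℤ) - 1) = (n : ℝ) * ((n : ℝ) - 1) := by
          simp only [hfdef]; rw [if_pos (by omega)]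
        rw [e1] at hb; rw [e2]
        nlinarith
      · intro j hj
        have h2 := (typeD n).ne_of_adj hj
        have hj2 : (j : ℕ) < n := j.isLt
        have := hadj j hj
        simp only [Finset.mem_singleton]
        omega
      · intro t ht
        simp only [Finset.mem_singleton] at ht
        exact fnonneg t (by omega)
    · by_cases hB : (i : ℕ) = n - 2
      · have hb := nbr_sum_le (typeD n) i f {(n : ℤ) - 3} ?_ ?_
        · rw [Finset.sum_singleton] at hb
          have hvi : ((i : ℕ) : ℤ) = (n : ℤ) - 2 := by omega
          rw [hvi]
          have e1 : f ((n : ℤ) - 3) = 2 * ((n : ℝ) - 2) * ((n : ℝ) + 1) := by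
            simp only [hfdef]; rw [if_neg (by omega)]; push_cast; ring
          have e2 : f ((n : ℤ) - 2) = (n : ℝ) * ((n : ℝ) - 1) := by
            simp only [hfdef]; rw [if_pos (by omega)]
          rw [e1] at hb; rw [e2]
          nlinarith
        · intro j hj
          have hj2 : (j : ℕ) < n := j.isLt
          have := hadj j hj
          simp only [Finset.mem_singleton]
          omega
        · intro t ht
          simp only [Finset.mem_singleton] at ht
          exact fnonneg t (by omega)
      · by_cases hC : (i : ℕ) = n - 3
        · -- fork node
          have hb := nbr_sum_le (typeD n) i f {(n : ℤ) - 4, (n : ℤ) - 2, (n : ℤ) - 1} ?_ ?_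
          · rw [Finset.sum_insert (by simp only [Finset.mem_insert, Finset.mem_singleton]; omega), Finset.sum_pair (by omega)] at hb
            have hvi : ((i : ℕ) : ℤ) = (n : ℤ) - 3 := by omega
            rw [hvi]
            have e1 : f ((n : ℤ) - 4) = 2 * ((n : ℝ) - 3) * ((n : ℝ) + 2) := by
              simp only [hfdef]; rw [if_neg (by omega)]; push_cast; ring
            have e2 : f ((n : ℤ) - 2) = (n : ℝ) * ((n : ℝ) - 1) := by
              simp only [hfdef]; rw [if_pos (by omega)]
            have e3 : f ((n : ℤ) - 1) = (n : ℝ) * ((n : ℝ) - 1) := by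
              simp only [hfdef]; rw [if_pos (by omega)]
            have e4 : f ((n : ℤ) - 3) = 2 * ((n : ℝ) - 2) * ((n : ℝ) + 1) := by
              simp only [hfdef]; rw [if_neg (by omega)]; push_cast; ring
            rw [e1, e2, e3] at hb; rw [e4]
            nlinarith
          · intro j hj
            have hj2 : (j : ℕ) < n := j.isLt
            have := hadj j hj
            simp only [Finset.mem_insert, Finset.mem_singleton]
            omega
          · intro t ht
            simp only [Finset.mem_insert, Finset.mem_singleton] at ht
            exact fnonneg t (by omega)
        · -- chain node with value ≤ n - 4
          have hile : (i : ℕ) ≤ n - 4 := by omega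
          have hb := nbr_sum_le (typeD n) i f {((i : ℕ) : ℤ) - 1, ((i : ℕ) : ℤ) + 1} ?_ ?_
          · rw [Finset.sum_pair (by omega)] at hb
            have e1 : f (((i : ℕ) : ℤ) - 1) =
                2 * ((i : ℕ) : ℝ) * (2 * (n : ℝ) - 1 - ((i : ℕ) : ℝ)) := by
              simp only [hfdef]; rw [if_neg (by omega)]; push_cast; ring
            have e2 : f (((i : ℕ) : ℤ) + 1) =
                2 * (((i : ℕ) : ℝ) + 2) * (2 * (n : ℝ) - 3 - ((i : ℕ) : ℝ)) := by
              simp only [hfdef]; rw [if_neg (by omega)]; push_cast; ring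
            have e3 : f (((i : ℕ) : ℤ)) =
                2 * (((i : ℕ) : ℝ) + 1) * (2 * (n : ℝ) - 2 - ((i : ℕ) : ℝ)) := by
              simp only [hfdef]; rw [if_neg (by omega)]; push_cast; ring
            rw [e1, e2] at hb; rw [e3]
            nlinarith
          · intro j hj
            have hj2 : (j : ℕ) < n := j.isLt
            have := hadj j hj
            simp only [Finset.mem_insert, Finset.mem_singleton]
            omega
          · intro t ht
            simp only [Finset.mem_insert, Finset.mem_singleton] at ht
            exact fnonneg t (by omega)

lemma typeE6_posDef : (cartanMat (typeE 6)).PosDef := by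
  classical
  apply cartan_posDef _ ![8, 15, 21, 15, 8, 11]
  · intro i; fin_cases i <;> norm_num
  · intro i
    have h : (cartanMat (typeE 6) *ᵥ ![8, 15, 21, 15, 8, 11]) i
        = ∑ j, cartanMat (typeE 6) i j * ![8, 15, 21, 15, 8, 11] j := by
      simp [Matrix.mulVec, dotProduct]
    rw [h]
    fin_cases i <;>
      simp only [Fin.sum_univ_six, cartan_apply, typeE, SimpleGraph.fromRel_adj] <;>
      norm_num [Fin.ext_iff, Fin.coe_ofNat_eq_mod, show (![8, 15, 21, 15, 8, 11] : Fin 6 → ℝ) 0 = 8 from rfl, show (![8, 15, 21, 15, 8, 11] : Fin 6 → ℝ) 1 = 15 from rfl, show (![8, 15, 21, 15, 8, 11] : Fin 6 → ℝ) 2 = 21 from rfl, show (![8, 15, 21, 15, 8, 11] : Fin 6 → ℝ) 3 = 15 from rfl, show (![8, 15, 21, 15, 8, 11] : Fin 6 → ℝ) 4 = 8 from rfl, show (![8, 15, 21, 15, 8, 11] : Fin 6 → ℝ) 5 = 11 from rfl]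

lemma typeE7_posDef : (cartanMat (typeE 7)).PosDef := by
  classical
  apply cartan_posDef _ ![34, 66, 96, 75, 52, 27, 49]
  · intro i; fin_cases i <;> norm_num
  · intro i
    have h : (cartanMat (typeE 7) *ᵥ ![34, 66, 96, 75, 52, 27, 49]) i
        = ∑ j, cartanMat (typeE 7) i j * ![34, 66, 96, 75, 52, 27, 49] j := by
      simp [Matrix.mulVec, dotProduct]
    rw [h]
    fin_cases i <;>
      simp only [Fin.sum_univ_seven, cartan_apply, typeE, SimpleGraph.fromRel_adj] <;>
      norm_num [Fin.ext_iff, Fin.coe_ofNat_eq_mod, show (![34, 66, 96, 75, 52, 27, 49] : Fin 7 → ℝ) 0 = 34 from rfl, show (![34, 66, 96, 75, 52, 27, 49] : Fin 7 → ℝ) 1 = 66 from rfl, show (![34, 66, 96, 75, 52, 27, 49] : Fin 7 → ℝ) 2 = 96 from rfl, show (![34, 66, 96, 75, 52, 27, 49] : Fin 7 → ℝ) 3 = 75 from rfl, show (![34, 66, 96, 75, 52, 27, 49] : Fin 7 → ℝ) 4 = 52 from rfl, show (![34, 66, 96, 75, 52, 27, 49] : Fin 7 → ℝ) 5 = 27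 from rfl, show (![34, 66, 96, 75, 52, 27, 49] : Fin 7 → ℝ) 6 = 49 from rfl]

lemma typeE8_posDef : (cartanMat (typeE 8)).PosDef := by
  classical
  apply cartan_posDef _ ![46, 91, 135, 110, 84, 57, 29, 68]
  · intro i; fin_cases i <;> norm_num
  · intro i
    have h : (cartanMat (typeE 8) *ᵥ ![46, 91, 135, 110, 84, 57, 29, 68]) i
        = ∑ j, cartanMat (typeE 8) i j * ![46, 91, 135, 110, 84, 57, 29, 68] j := by
      simp [Matrix.mulVec, dotProduct]
    rw [h]
    fin_cases i <;>
      simp only [Fin.sum_univ_eight, cartan_apply, typeE, SimpleGraph.fromRel_adj] <;>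
      norm_num [Fin.ext_iff, Fin.coe_ofNat_eq_mod, show (![46, 91, 135, 110, 84, 57, 29, 68] : Fin 8 → ℝ) 0 = 46 from rfl, show (![46, 91, 135, 110, 84, 57, 29, 68] : Fin 8 → ℝ) 1 = 91 from rfl, show (![46, 91, 135, 110, 84, 57, 29, 68] : Fin 8 → ℝ) 2 = 135 from rfl, show (![46, 91, 135, 110, 84, 57, 29, 68] : Fin 8 → ℝ) 3 = 110 from rfl, show (![46, 91, 135, 110, 84, 57, 29, 68] : Fin 8 → ℝ) 4 = 84 from rfl, show (![46, 91, 135, 110, 84, 57, 29, 68] : Fin 8 → ℝ) 5 = 57 from rfl, show (![46, 91, 135, 110, 84, 57, 29, 68] : Fin 8 → ℝ) 6 = 29 from rfl, show (![46, 91, 135, 110, 84, 57, 29, 68] : Fin 8 → ℝ) 7 = 68 from rfl]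

/-- The Cartan matrix `C = 2I − A` of a simply-laced Dynkin diagram of type
`A_n, D_n, E_6, E_7` or `E_8` is positive definite. -/
theorem cartan_matrix_ADE_posDef :
    (∀ n : ℕ, 1 ≤ n → (cartanMat (pathGraph n)).PosDef) ∧
    (∀ n : ℕ, 4 ≤ n → (cartanMat (typeD n)).PosDef) ∧
    (cartanMat (typeE 6)).PosDef ∧ (cartanMat (typeE 7)).PosDef ∧
    (cartanMat (typeE 8)).PosDef := by
  exact ⟨fun n _ => path_posDef n, fun n hn => typeD_posDef n hn,
    typeE6_posDef, typeE7_posDef, typeE8_posDef⟩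
end

section
/- Define (k+1)×(k+1) matrices N_0 = I and N_1 the adjacency matrix of the path graph A_{k+1} (nodes 0,…,k, edges between consecutive nodes), and recursively N_1 N_j = N_{j−1} + N_{j+1} for 1 ≤ j ≤ k−1 with N_1 N_k = N_{k−1}. Then the matrices N_0, …, N_k are well-defined, pairwise commute, and the structure constants (N_i)_{ab} are nonnegative integers satisfying (N_i)_{ab} = (N_a)_{ib}. -/
/-- The adjacency matrix of the path graph `A_{k+1}` with nodes `0, …, k` and edges
between consecutive nodes. -/
def pathAdj (k : ℕ) : Matrix (Fin (k + 1)) (Fin (k + 1)) ℤ :=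
  fun a b => if (a : ℕ) + 1 = b ∨ (b : ℕ) + 1 = a then 1 else 0

/-- The graph-algebra matrices `N_0 = I`, `N_1 = pathAdj k`, and
`N_{j+2} = N_1 * N_{j+1} − N_j`. -/
def graphAlgN (k : ℕ) : ℕ → Matrix (Fin (k + 1)) (Fin (k + 1)) ℤ
  | 0 => 1
  | 1 => pathAdj k
  | (j + 2) => pathAdj k * graphAlgN k (j + 1) - graphAlgN k j

/-- Explicit fusion coefficients. -/
def fusF (k j a b : ℕ) : ℤ :=
  if a ≤ b + j ∧ b ≤ a + j ∧ j ≤ a + b ∧ j + a + b ≤ 2 * k ∧ (j + a + b) % 2 = 0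
  then 1 else 0

lemma sum_ite_val {k : ℕ} (v : ℕ) (f : Fin (k + 1) → ℤ) :
    (∑ c : Fin (k + 1), if (c : ℕ) = v then f c else 0)
      = if h : v ≤ k then f ⟨v, by omega⟩ else 0 := by
  by_cases h : v ≤ k
  · rw [dif_pos h]
    have : ∀ c : Fin (k + 1), ((c : ℕ) = v) = (c = ⟨v, by omega⟩) := by
      intro c; simp [Fin.ext_iff]
    simp_rw [this]
    simp
  · rw [dif_neg h]
    apply Finset.sum_eq_zero
    intro c _
    rw [if_neg]
    have := c.isLt; omega

lemma pathAdj_mul_apply {k : ℕ} (M : Matrix (Fin (k + 1)) (Fin (k + 1)) ℤ)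
    (a b : Fin (k + 1)) :
    (pathAdj k * M) a b
      = (if h : (a : ℕ) + 1 ≤ k then M ⟨(a : ℕ) + 1, by omega⟩ b else 0)
        + (if h : 1 ≤ (a : ℕ) then M ⟨(a : ℕ) - 1, by omega⟩ b else 0) := by
  rw [Matrix.mul_apply]
  have split : ∀ c : Fin (k + 1),
      pathAdj k a c * M c b
        = (if (c : ℕ) = (a : ℕ) + 1 then M c b else 0)
          + (if (c : ℕ) = (a : ℕ) - 1 ∧ 1 ≤ (a : ℕ) then M c b else 0) := by
    intro c
    unfold pathAdj
    have := a.isLt; have := c.isLt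
    split_ifs <;> first | omega | ring
  simp_rw [split, Finset.sum_add_distrib]
  rw [sum_ite_val ((a : ℕ) + 1) (fun c => M c b)]
  by_cases ha : 1 ≤ (a : ℕ)
  · simp only [ha, and_true]
    rw [sum_ite_val ((a : ℕ) - 1) (fun c => M c b)]
    have := a.isLt
    rw [dif_pos (show (a : ℕ) - 1 ≤ k by omega)]
    simp
  · simp only [ha, and_false, if_false, Finset.sum_const_zero]
    simp

lemma fusF_key (k j a b : ℕ) (ha : a ≤ k) (hb : b ≤ k) (hj : j + 2 ≤ k + 1) :
    (if a + 1 ≤ k then fusF k (j + 1) (a + 1) b else 0)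
      + (if 1 ≤ a then fusF k (j + 1) (a - 1) b else 0)
      - fusF k j a b = fusF k (j + 2) a b := by
  unfold fusF
  split_ifs <;> omega

lemma graphAlgN_eq (k : ℕ) : ∀ j, j ≤ k + 1 → ∀ a b : Fin (k + 1),
    graphAlgN k j a b = fusF k j (a : ℕ) (b : ℕ)
  | 0, _, a, b => by
    have := a.isLt; have := b.isLt
    simp only [graphAlgN, Matrix.one_apply, fusF, Fin.ext_iff]
    split_ifs <;> omega
  | 1, _, a, b => by
    have := a.isLt; have := b.isLt
    simp only [graphAlgN, pathAdj, fusF]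
    split_ifs <;> omega
  | (j + 2), hj, a, b => by
    have ha := a.isLt; have hb := b.isLt
    show (pathAdj k * graphAlgN k (j + 1) - graphAlgN k j) a b = _
    rw [Matrix.sub_apply, pathAdj_mul_apply,
      graphAlgN_eq k j (by omega) a b]
    by_cases h1 : (a : ℕ) + 1 ≤ k
    · rw [dif_pos h1, graphAlgN_eq k (j + 1) (by omega) _ b]
      by_cases h2 : 1 ≤ (a : ℕ)
      · rw [dif_pos h2, graphAlgN_eq k (j + 1) (by omega) _ b]
        have := fusF_key k j a b (by omega) (by omega) hj
        rw [if_pos h1, if_pos h2] at this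
        simpa using this
      · rw [dif_neg h2]
        have := fusF_key k j a b (by omega) (by omega) hj
        rw [if_pos h1, if_neg h2] at this
        simpa using this
    · rw [dif_neg h1]
      by_cases h2 : 1 ≤ (a : ℕ)
      · rw [dif_pos h2, graphAlgN_eq k (j + 1) (by omega) _ b]
        have := fusF_key k j a b (by omega) (by omega) hj
        rw [if_neg h1, if_pos h2] at this
        simpa using this
      · rw [dif_neg h2]
        have := fusF_key k j a b (by omega) (by omega) hj
        rw [if_neg h1, if_neg h2] at this
        simpa using this

lemma graphAlgN_top (k : ℕ) : graphAlgN k (k + 1) = 0 := by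
  ext a b
  rw [graphAlgN_eq k (k + 1) le_rfl a b]
  have := a.isLt; have := b.isLt
  unfold fusF
  rw [if_neg]
  · rfl
  · omega

lemma path_commute (k : ℕ) : ∀ j, Commute (pathAdj k) (graphAlgN k j)
  | 0 => Commute.one_right _
  | 1 => Commute.refl _
  | (j + 2) =>
    ((Commute.refl (pathAdj k)).mul_right (path_commute k (j + 1))).sub_right
      (path_commute k j)

lemma graphAlgN_commute (k : ℕ) : ∀ i j, Commute (graphAlgN k i) (graphAlgN k j)
  | 0, j => Commute.one_left _
  | 1, j => path_commute k j
  | (i + 2), j =>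
    ((path_commute k j).mul_left (graphAlgN_commute k (i + 1) j)).sub_left
      (graphAlgN_commute k i j)

/-- With `N_0 = I` and `N_1` the adjacency matrix of the path graph `A_{k+1}`, the
matrices defined recursively by `N_1 N_j = N_{j−1} + N_{j+1}` for `1 ≤ j ≤ k−1` with
`N_1 N_k = N_{k−1}` are well defined, pairwise commute, and the structure constants
`(N_i)_{ab}` are nonnegative integers satisfying `(N_i)_{ab} = (N_a)_{ib}`. -/
theorem graphAlg_fusion (k : ℕ) (hk : 1 ≤ k) :
    (∀ j : ℕ, 1 ≤ j → j ≤ k - 1 →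
      pathAdj k * graphAlgN k j = graphAlgN k (j - 1) + graphAlgN k (j + 1)) ∧
    (pathAdj k * graphAlgN k k = graphAlgN k (k - 1)) ∧
    (∀ i j : ℕ, graphAlgN k i * graphAlgN k j = graphAlgN k j * graphAlgN k i) ∧
    (∀ (i : Fin (k + 1)) (a b : Fin (k + 1)),
      ∃ m : ℕ, graphAlgN k (i : ℕ) a b = m) ∧
    (∀ (i : Fin (k + 1)) (a b : Fin (k + 1)),
      graphAlgN k (i : ℕ) a b = graphAlgN k (a : ℕ) i b) := by
  refine ⟨?_, ?_, ?_, ?_, ?_⟩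
  · intro j hj _
    obtain ⟨j', rfl⟩ : ∃ j', j = j' + 1 := ⟨j - 1, by omega⟩
    have : graphAlgN k (j' + 2) = pathAdj k * graphAlgN k (j' + 1) - graphAlgN k j' := rfl
    simp only [Nat.add_sub_cancel]
    rw [this]; abel
  · obtain ⟨k', rfl⟩ : ∃ k', k = k' + 1 := ⟨k - 1, by omega⟩
    have h1 : graphAlgN (k' + 1) (k' + 2) = pathAdj (k' + 1) * graphAlgN (k' + 1) (k' + 1)
        - graphAlgN (k' + 1) k' := rfl
    have h2 := graphAlgN_top (k' + 1)
    rw [h1] at h2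
    rw [sub_eq_zero] at h2
    simp only [Nat.add_sub_cancel]
    exact h2
  · intro i j; exact graphAlgN_commute k i j
  · intro i a b
    rw [graphAlgN_eq k i (by have := i.isLt; omega) a b]
    unfold fusF
    split_ifs
    · exact ⟨1, rfl⟩
    · exact ⟨0, rfl⟩
  · intro i a b
    rw [graphAlgN_eq k i (by have := i.isLt; omega) a b,
      graphAlgN_eq k a (by have := a.isLt; omega) i b]
    unfold fusF
    congr 1
    simp only [eq_iff_iff]
    constructor <;> (intro h; omega)
end

section
/- The SU(2) level k fusion coefficients, defined for a,b,c ∈ {0,1,…,k} by N_{ab}^c = 1 if |a−b| ≤ c ≤ min(a+b, 2k−a−b) and a+b+c is even, and 0 otherwise, define an associative commutative ring structure on the free Z-module with basis φ_0,…,φ_k via φ_a · φ_b = Σ_c N_{ab}^c φ_c, with φ_0 as unit. -/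
/-- The `SU(2)` level-`k` fusion coefficient `N_{ab}^c`, for `a,b,c ∈ {0,…,k}`:
`N_{ab}^c = 1` if `|a−b| ≤ c ≤ min(a+b, 2k−a−b)` and `a+b+c` is even, else `0`. -/
def fusionN (k a b c : ℕ) : ℤ :=
  if b ≤ a + c ∧ a ≤ b + c ∧ c ≤ a + b ∧ a + b + c ≤ 2 * k ∧ Even (a + b + c) then 1
  else 0

/-- Indicator of membership in the arithmetic progression `lo, lo+2, …` up to `hi`. -/
def fusInd (lo hi c : ℕ) : ℤ :=
  if lo ≤ c ∧ c ≤ hi ∧ (lo + c) % 2 = 0 then 1 else 0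

/-- Lower bound `max(|x−y|, |z−w|)`. -/
def fusLo (x y z w : ℕ) : ℕ := max (max (x - y) (y - x)) (max (z - w) (w - z))

/-- Upper bound `min(x+y, z+w, 2k−x−y, 2k−z−w)`. -/
def fusHi (k x y z w : ℕ) : ℕ :=
  min (min (x + y) (z + w)) (min (2 * k - (x + y)) (2 * k - (z + w)))

/-- Counting an arithmetic progression of step 2 inside `range (k+1)`. -/
lemma count_card (k lo hi : ℕ) (h2 : hi ≤ k) :
    ((Finset.range (k + 1)).filter fun c => lo ≤ c ∧ c ≤ hi ∧ (lo + c) % 2 = 0).card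
      = if lo ≤ hi then (hi - lo) / 2 + 1 else 0 := by
  split_ifs with h
  · have himg : ((Finset.range (k + 1)).filter
        fun c => lo ≤ c ∧ c ≤ hi ∧ (lo + c) % 2 = 0)
        = (Finset.range ((hi - lo) / 2 + 1)).image (fun i => lo + 2 * i) := by
      ext c
      simp only [Finset.mem_filter, Finset.mem_range, Finset.mem_image]
      constructor
      · rintro ⟨hc, h1, hle, hpar⟩
        exact ⟨(c - lo) / 2, by omega, by omega⟩
      · rintro ⟨i, hi', rfl⟩
        omega
    rw [himg, Finset.card_image_of_injective _ (fun i j hij => by omega),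
      Finset.card_range]
  · rw [Finset.filter_eq_empty_iff.2 (fun c _ => by omega), Finset.card_empty]

/-- Summing the indicator over `range (k+1)`. -/
lemma count_sum (k lo hi : ℕ) (h2 : hi ≤ k) :
    (∑ c ∈ Finset.range (k + 1), fusInd lo hi c)
      = if lo ≤ hi then (((hi - lo) / 2 + 1 : ℕ) : ℤ) else 0 := by
  unfold fusInd
  rw [Finset.sum_boole, count_card k lo hi h2]
  split_ifs <;> simp

/-- Commutativity of the fusion coefficients in the first two arguments. -/
lemma fusionN_comm (k a b c : ℕ) : fusionN k a b c = fusionN k b a c := by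
  unfold fusionN
  split_ifs with h1 h2 <;> try rfl
  all_goals (exfalso; simp only [Nat.even_iff] at *; omega)

set_option maxHeartbeats 1000000 in
/-- Each term of the associativity sum is an interval indicator. -/
lemma term_eq_ind (k x y z w c : ℕ) (hc : c ≤ k) (hx : x ≤ k) (hy : y ≤ k) (hz : z ≤ k) (hw : w ≤ k)
    (hpar : (x + y + z + w) % 2 = 0) :
    fusionN k x y c * fusionN k c z w = fusInd (fusLo x y z w) (fusHi k x y z w) c := by
  unfold fusionN fusInd fusLo fusHi
  by_cases hT : max (max (x - y) (y - x)) (max (z - w) (w - z)) ≤ c ∧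
      c ≤ min (min (x + y) (z + w)) (min (2 * k - (x + y)) (2 * k - (z + w))) ∧
      (max (max (x - y) (y - x)) (max (z - w) (w - z)) + c) % 2 = 0
  · have hPQ : (y ≤ x + c ∧ x ≤ y + c ∧ c ≤ x + y ∧ x + y + c ≤ 2 * k ∧
        (x + y + c) % 2 = 0) ∧ z ≤ c + w ∧ c ≤ z + w ∧ w ≤ c + z ∧
        c + z + w ≤ 2 * k ∧ (c + z + w) % 2 = 0 := by omega
    rw [if_pos hT,
      if_pos ⟨hPQ.1.1, hPQ.1.2.1, hPQ.1.2.2.1, hPQ.1.2.2.2.1,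
        Nat.even_iff.2 hPQ.1.2.2.2.2⟩,
      if_pos ⟨hPQ.2.1, hPQ.2.2.1, hPQ.2.2.2.1, hPQ.2.2.2.2.1,
        Nat.even_iff.2 hPQ.2.2.2.2.2⟩,
      one_mul]
  · rw [if_neg hT]
    by_cases hP : y ≤ x + c ∧ x ≤ y + c ∧ c ≤ x + y ∧ x + y + c ≤ 2 * k ∧
        Even (x + y + c)
    · by_cases hQ : z ≤ c + w ∧ c ≤ z + w ∧ w ≤ c + z ∧ c + z + w ≤ 2 * k ∧
          Even (c + z + w)
      · exfalso
        obtain ⟨p1, p2, p3, p4, p5⟩ := hP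
        obtain ⟨q1, q2, q3, q4, q5⟩ := hQ
        rw [Nat.even_iff] at p5 q5
        exact hT ⟨by omega, by omega, by omega⟩
      · rw [if_neg hQ, mul_zero]
    · rw [if_neg hP, zero_mul]

/-- Closed form for one side of the associativity sum. -/
lemma side_sum (k x y z w : ℕ) (hx : x ≤ k) (hy : y ≤ k) (hz : z ≤ k) (hw : w ≤ k)
    (hpar : (x + y + z + w) % 2 = 0) :
    (∑ c ∈ Finset.range (k + 1), fusionN k x y c * fusionN k c z w)
      = if fusLo x y z w ≤ fusHi k x y z w
        then (((fusHi k x y z w - fusLo x y z w) / 2 + 1 : ℕ) : ℤ) else 0 := by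
  rw [Finset.sum_congr rfl fun c hc =>
      term_eq_ind k x y z w c (Nat.lt_succ_iff.mp (Finset.mem_range.mp hc)) hx hy hz hw hpar]
  exact count_sum k _ _ (by unfold fusHi; omega)

/-- Both sides vanish termwise when the total parity is odd. -/
lemma term_zero (k x y z w c : ℕ) (hpar : (x + y + z + w) % 2 = 1) :
    fusionN k x y c * fusionN k c z w = 0 := by
  unfold fusionN
  split_ifs with h1 h2 <;> try ring
  exfalso; simp only [Nat.even_iff] at h1 h2; omega

set_option maxHeartbeats 1000000 in
/-- Decomposition: `Hi − Lo` is twice a value bounded by all 16 symmetric terms. -/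
lemma hi_lo_decomp (k x y z w σ : ℤ) (hσ : x + y + z + w = 2 * σ) :
    ∃ M : ℤ, min (min (x+y) (z+w)) (min (2*k-(x+y)) (2*k-(z+w)))
        - max (max (x-y) (y-x)) (max (z-w) (w-z)) = 2 * M ∧
      M ≤ x ∧ M ≤ y ∧ M ≤ z ∧ M ≤ w ∧
      M ≤ σ - x ∧ M ≤ σ - y ∧ M ≤ σ - z ∧ M ≤ σ - w ∧
      M ≤ k - x ∧ M ≤ k - y ∧ M ≤ k - z ∧ M ≤ k - w ∧
      M ≤ k - σ + x ∧ M ≤ k - σ + y ∧ M ≤ k - σ + z ∧ M ≤ k - σ + w := by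
  refine ⟨(min (min (x+y) (z+w)) (min (2*k-(x+y)) (2*k-(z+w)))
      - max (max (x-y) (y-x)) (max (z-w) (w-z))) / 2,
    by omega, by omega, by omega, by omega, by omega, by omega, by omega, by omega,
    by omega, by omega, by omega, by omega, by omega, by omega, by omega, by omega, by omega⟩

set_option maxHeartbeats 1000000 in
/-- Conversely, any such value gives a lower bound on `Hi − Lo`. -/
lemma hi_lo_ge (k x y z w σ M : ℤ) (hσ : x + y + z + w = 2 * σ)
    (h1 : M ≤ x) (h2 : M ≤ y) (h3 : M ≤ z) (h4 : M ≤ w)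
    (h5 : M ≤ σ - x) (h6 : M ≤ σ - y) (h7 : M ≤ σ - z) (h8 : M ≤ σ - w)
    (h9 : M ≤ k - x) (h10 : M ≤ k - y) (h11 : M ≤ k - z) (h12 : M ≤ k - w)
    (h13 : M ≤ k - σ + x) (h14 : M ≤ k - σ + y) (h15 : M ≤ k - σ + z)
    (h16 : M ≤ k - σ + w) :
    2 * M ≤ min (min (x+y) (z+w)) (min (2*k-(x+y)) (2*k-(z+w)))
      - max (max (x-y) (y-x)) (max (z-w) (w-z)) := by
  omega

/-- The key symmetry: `Hi − Lo` is invariant under the cyclic move `(x,y,z,w) ↦ (y,z,x,w)`. -/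
lemma hi_lo_key (k x y z w σ : ℤ) (hσ : x + y + z + w = 2 * σ) :
    min (min (x+y) (z+w)) (min (2*k-(x+y)) (2*k-(z+w)))
        - max (max (x-y) (y-x)) (max (z-w) (w-z))
      = min (min (y+z) (x+w)) (min (2*k-(y+z)) (2*k-(x+w)))
        - max (max (y-z) (z-y)) (max (x-w) (w-x)) := by
  obtain ⟨M, hM, b1, b2, b3, b4, b5, b6, b7, b8, b9, b10, b11, b12, b13, b14, b15, b16⟩ :=
    hi_lo_decomp k x y z w σ hσ
  obtain ⟨M', hM', c1, c2, c3, c4, c5, c6, c7, c8, c9, c10, c11, c12, c13, c14, c15, c16⟩ :=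
    hi_lo_decomp k y z x w σ (by linarith)
  have g1 := hi_lo_ge k y z x w σ M (by linarith)
    b2 b3 b1 b4 b6 b7 b5 b8 b10 b11 b9 b12 b14 b15 b13 b16
  have g2 := hi_lo_ge k x y z w σ M' hσ
    c3 c1 c2 c4 c7 c5 c6 c8 c11 c9 c10 c12 c15 c13 c14 c16
  linarith [hM, hM', g1, g2]

/-- Cast of `max (x−y) (y−x)` to `ℤ`. -/
lemma absdiff_cast (x y : ℕ) :
    ((max (x - y) (y - x) : ℕ) : ℤ) = max ((x:ℤ) - (y:ℤ)) ((y:ℤ) - (x:ℤ)) := by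
  omega

/-- Cast of `fusLo` to `ℤ`. -/
lemma fusLo_cast (x y z w : ℕ) :
    ((fusLo x y z w : ℕ) : ℤ)
      = max (max ((x:ℤ) - (y:ℤ)) ((y:ℤ) - (x:ℤ))) (max ((z:ℤ) - (w:ℤ)) ((w:ℤ) - (z:ℤ))) := by
  unfold fusLo
  rw [Nat.cast_max, absdiff_cast, absdiff_cast]

set_option maxHeartbeats 1000000 in
/-- Cast of `fusHi` to `ℤ`. -/
lemma fusHi_cast (k x y z w : ℕ) (h1 : x + y ≤ 2 * k) (h2 : z + w ≤ 2 * k) :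
    ((fusHi k x y z w : ℕ) : ℤ)
      = min (min ((x:ℤ) + (y:ℤ)) ((z:ℤ) + (w:ℤ)))
          (min (2*(k:ℤ) - ((x:ℤ) + (y:ℤ))) (2*(k:ℤ) - ((z:ℤ) + (w:ℤ)))) := by
  unfold fusHi
  omega

/-- The interval data on both sides of the associativity identity agree. -/
lemma fus_key (k a b d e : ℕ) (ha : a ≤ k) (hb : b ≤ k) (hd : d ≤ k) (he : e ≤ k)
    (hpar : (a + b + d + e) % 2 = 0) :
    fusHi k a b d e + fusLo b d a e = fusHi k b d a e + fusLo a b d e := by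
  have K := hi_lo_key (k:ℤ) (a:ℤ) (b:ℤ) (d:ℤ) (e:ℤ) (((a + b + d + e) / 2 : ℕ) : ℤ)
    (by omega)
  rw [← fusHi_cast k a b d e (by omega) (by omega), ← fusLo_cast a b d e,
    ← fusHi_cast k b d a e (by omega) (by omega), ← fusLo_cast b d a e] at K
  omega

set_option maxHeartbeats 1000000 in
/-- The `SU(2)` level-`k` fusion coefficients define an associative, commutative ring
structure with unit `φ_0` on the free `ℤ`-module with basis `φ_0, …, φ_k` via
`φ_a · φ_b = Σ_c N_{ab}^c φ_c`: the structure constants are commutative, `φ_0` acts as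
the unit, and the product is associative. -/
theorem su2_fusion_ring (k : ℕ) :
    (∀ a b c : ℕ, a ≤ k → b ≤ k → c ≤ k → fusionN k a b c = fusionN k b a c) ∧
    (∀ b c : ℕ, b ≤ k → c ≤ k → fusionN k 0 b c = if b = c then 1 else 0) ∧
    (∀ a b d e : ℕ, a ≤ k → b ≤ k → d ≤ k → e ≤ k →
      ∑ c ∈ Finset.range (k + 1), fusionN k a b c * fusionN k c d e =
        ∑ c ∈ Finset.range (k + 1), fusionN k b d c * fusionN k a c e) := by
  refine ⟨fun a b c _ _ _ => fusionN_comm k a b c, ?_, ?_⟩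
  · intro b c hb hc
    unfold fusionN
    split_ifs with h1 h2 <;> try rfl
    all_goals (exfalso; simp only [Nat.even_iff] at *; omega)
  · intro a b d e ha hb hd he
    have hrw : ∀ c ∈ Finset.range (k + 1),
        fusionN k b d c * fusionN k a c e = fusionN k b d c * fusionN k c a e :=
      fun c _ => by rw [fusionN_comm k a c e]
    rw [Finset.sum_congr rfl hrw]
    rcases Nat.even_or_odd (a + b + d + e) with hpar | hpar
    · rw [Nat.even_iff] at hpar
      rw [side_sum k a b d e ha hb hd he (by omega), side_sum k b d a e hb hd ha he (by omega)]
      have key := fus_key k a b d e ha hb hd he hpar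
      split_ifs <;> omega
    · rw [Nat.odd_iff] at hpar
      rw [Finset.sum_congr rfl fun c _ => term_zero k a b d e c (by omega),
        Finset.sum_congr rfl fun c _ => term_zero k b d a e c (by omega)]
end
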